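/- Let A be a poset matrix of size n. If for every pair of distinct poset vectors v, w of A (characteristic vectors of order ideals of P_A) the supports of v and w have different cardinalities, then the automorphism group Aut(A) = {Q permutation matrix : Q^T A Q = A} is trivial, i.e., contains only the identity matrix. -/
import Mathlib


/-- If all poset vectors of a poset matrix `A` (characteristic vectors of order ideals of
the associated naturally labeled poset `P`) have pairwise distinct support sizes, then
`Aut(A)` is trivial. -/
theorem stmt_7 (n : ℕ) (P : PartialOrder (Fin n))
    (hnat : ∀ x y : Fin n, P.le x y → (x : ℕ) ≤ (y : ℕ))
    (hcard : ∀ v w : Fin n → Bool,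
        (∀ i j : Fin n, v i = true → P.le j i → v j = true) →
        (∀ i j : Fin n, w i = true → P.le j i → w j = true) →
        v ≠ w →
        (Finset.univ.filter fun i => v i = true).card ≠
          (Finset.univ.filter fun i => w i = true).card) :
    ∀ σ : Equiv.Perm (Fin n),
      (∀ i j : Fin n, P.le (σ i) (σ j) ↔ P.le i j) → σ = 1 := by
  classical
  intro σ hσ
  have key : ∀ x : Fin n, σ x = x := by
    intro x
    set v : Fin n → Bool := fun y => decide (P.le y x) with hv
    set w : Fin n → Bool := fun y => decide (P.le y (σ x)) with hw
    have hvi : ∀ i j : Fin n, v i = true → P.le j i → v j = true := by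
      intro i j hi hji
      simp only [hv, decide_eq_true_eq] at hi ⊢
      exact P.le_trans _ _ _ hji hi
    have hwi : ∀ i j : Fin n, w i = true → P.le j i → w j = true := by
      intro i j hi hji
      simp only [hw, decide_eq_true_eq] at hi ⊢
      exact P.le_trans _ _ _ hji hi
    have hcards : (Finset.univ.filter fun i => v i = true).card =
        (Finset.univ.filter fun i => w i = true).card := by
      apply Finset.card_bij (fun a _ => σ a)
      · intro a ha
        simp only [hv, Finset.mem_filter, Finset.mem_univ, decide_eq_true_eq, true_and] at ha
        simp only [hw, Finset.mem_filter, Finset.mem_univ, decide_eq_true_eq, true_and]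
        exact (hσ a x).mpr ha
      · intro a _ b _ hab
        exact σ.injective hab
      · intro b hb
        simp only [hw, Finset.mem_filter, Finset.mem_univ, decide_eq_true_eq, true_and] at hb
        refine ⟨σ.symm b, ?_, by simp⟩
        simp only [hv, Finset.mem_filter, Finset.mem_univ, decide_eq_true_eq, true_and]
        have := (hσ (σ.symm b) x).mp
        simp only [Equiv.apply_symm_apply] at this
        exact this hb
    have hvw : v = w := by
      by_contra hne
      exact hcard v w hvi hwi hne hcards
    have h1 : P.le x (σ x) := by
      have : w x = true := by
        rw [← hvw]; simp [hv, P.le_refl]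
      simpa [hw, decide_eq_true_eq] using this
    have h2 : P.le (σ x) x := by
      have : v (σ x) = true := by
        rw [hvw]; simp [hw, P.le_refl]
      simpa [hv, decide_eq_true_eq] using this
    exact P.le_antisymm _ _ h2 h1
  exact Equiv.ext key
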